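/- arXiv:2604.26922 — 4 statements merged into one kernel-verified Lean document; each statement's English description precedes it below -/
import Mathlib

section
/- Let (a_n) be a sequence in [0,1] and let p, p', c, q be as in the two-point construction with 1 < c < p'/p and q = 1 − c·p/p'. If a_n ≤ 1/2 for infinitely many n, then under the point mass at p, an algorithm that outputs p with probability a_n on the all-p sample has expected revenue at most p/2 ≤ opt − p/2 for infinitely many n. Otherwise a_n > 1/2 for all but finitely many n, and under D', the event that all n samples equal p has probability q^n, on which the algorithm's expected revenue is at most ((c+1)/2)·p, giving expected revenue gap at least q^n·((c−1)/2)·p for infinitely many n. Hence no algorithm restricted to outputting p or p' can have expected revenue gap o(q^n) simultaneously against both distributions for all large n. -/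
open Filter Asymptotics

/-- Exponential-rates lower bound dichotomy. With the two-point construction
(`0 < p < p'`, `1 < c < p'/p`, `q = 1 − c·p/p'`) and `a n` the probability
that the algorithm outputs `p` on the all-`p` sample of size `n`:
(i) if `a n ≤ 1/2` for infinitely many `n`, then on those `n` the expected
revenue `a n · p` under the point mass at `p` is at most `opt − p/2 = p − p/2`;
(ii) otherwise, eventually `a n > 1/2`, the conditional expected revenue under
`D'` on the (probability `q^n`) all-`p` event is at most `((c+1)/2)·p`, giving
a revenue gap of at least `q^n·((c−1)/2)·p`;
hence the gap sequences under the two distributions cannot both be `o(q^n)`. -/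
theorem stmt8 (p p' c q : ℝ) (hp : 0 < p) (hpp' : p < p')
    (hc1 : 1 < c) (hc2 : c < p' / p) (hq : q = 1 - c * p / p')
    (a : ℕ → ℝ) (ha : ∀ n, a n ∈ Set.Icc (0:ℝ) 1) :
    ((Set.Infinite {n : ℕ | a n ≤ 1/2}) →
      ∀ n ∈ {n : ℕ | a n ≤ 1/2}, a n * p ≤ p - p / 2) ∧
    ((Set.Finite {n : ℕ | a n ≤ 1/2}) →
      ∃ N, ∀ n ≥ N, 1/2 < a n ∧
        a n * p + (1 - a n) * (c * p) ≤ ((c + 1) / 2) * p ∧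
        q ^ n * ((c - 1) / 2) * p ≤
          q ^ n * (c * p - (a n * p + (1 - a n) * (c * p)))) ∧
    ¬ ((fun n : ℕ => p - a n * p) =o[atTop] (fun n : ℕ => q ^ n) ∧
       (fun n : ℕ => q ^ n * (a n * (c - 1) * p)) =o[atTop] (fun n : ℕ => q ^ n)) := by
  have hp'0 : 0 < p' := lt_trans hp hpp'
  have hcp : c * p < p' := by
    calc c * p < (p' / p) * p := by nlinarith

    _ = p' := by field_simp
  have hq0 : 0 < q := by
    rw [hq]
    have : c * p / p' < 1 := (div_lt_one hp'0).2 hcp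
    linarith
  have hq1 : q < 1 := by
    rw [hq]
    have : 0 < c * p / p' := by positivity
    linarith
  refine ⟨?_, ?_, ?_⟩
  · intro _ n hn
    have := (ha n).1
    simp only [Set.mem_setOf_eq] at hn
    nlinarith
  · intro hfin
    have hev : ∀ᶠ n in atTop, ¬ a n ≤ 1/2 := by
      rw [← Nat.cofinite_eq_atTop]
      exact hfin.compl_mem_cofinite
    obtain ⟨N, hN⟩ := eventually_atTop.mp hev
    refine ⟨N, fun n hn => ?_⟩
    have han : 1/2 < a n := lt_of_not_ge (hN n hn)
    have hqn : (0:ℝ) ≤ q ^ n := le_of_lt (pow_pos hq0 n)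
    have key : 0 ≤ (a n - 1/2) * ((c - 1) * p) :=
      mul_nonneg (by linarith) (mul_nonneg (by linarith) hp.le)
    refine ⟨han, by nlinarith, ?_⟩
    have h1 : ((c - 1) / 2) * p ≤ c * p - (a n * p + (1 - a n) * (c * p)) := by
      nlinarith [key]
    calc q ^ n * ((c - 1) / 2) * p = q ^ n * (((c - 1) / 2) * p) := by ring
    _ ≤ _ := mul_le_mul_of_nonneg_left h1 hqn
  · rintro ⟨h1, h2⟩
    by_cases hinf : Set.Infinite {n : ℕ | a n ≤ 1/2}
    · -- infinitely often p - a n p ≥ p/2, but h1 forces it small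
      have hfreq : ∃ᶠ n in atTop, a n ≤ 1/2 := Nat.frequently_atTop_iff_infinite.2 hinf
      have htend : Tendsto (fun n : ℕ => q ^ n) atTop (nhds 0) :=
        tendsto_pow_atTop_nhds_zero_of_lt_one hq0.le hq1
      have hsmall : ∀ᶠ n in atTop, q ^ n < p / 4 :=
        htend.eventually_lt_const (by positivity)
      have hb := (h1.def one_pos)
      obtain ⟨n, hn1, hn2, hn3⟩ := (hfreq.and_eventually (hsmall.and hb)).exists
      have han := (ha n).2
      have hqn : (0:ℝ) < q ^ n := pow_pos hq0 n
      have : ‖p - a n * p‖ ≤ 1 * ‖q ^ n‖ := hn3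
      rw [Real.norm_eq_abs, Real.norm_eq_abs, abs_of_pos hqn, one_mul,
        abs_of_nonneg (by nlinarith)] at this
      nlinarith
    · have hfin := Set.not_infinite.mp hinf
      have hev : ∀ᶠ n in atTop, ¬ a n ≤ 1/2 := by
        rw [← Nat.cofinite_eq_atTop]
        exact hfin.compl_mem_cofinite
      have hε : (0:ℝ) < (c - 1) * p / 4 := by nlinarith
      have hb := h2.def hε
      obtain ⟨n, hn1, hn2⟩ := (hev.and hb).exists
      have han : 1/2 < a n := lt_of_not_ge hn1
      have hqn : (0:ℝ) < q ^ n := pow_pos hq0 n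
      have h3 : ‖q ^ n * (a n * (c - 1) * p)‖ ≤ (c - 1) * p / 4 * ‖q ^ n‖ := hn2
      rw [Real.norm_eq_abs, Real.norm_eq_abs, abs_of_pos hqn,
        abs_of_nonneg (by nlinarith [mul_nonneg (mul_nonneg hqn.le (mul_nonneg (le_trans (by norm_num) han.le) (show (0:ℝ) ≤ c - 1 by linarith))) hp.le] : (0:ℝ) ≤ q ^ n * (a n * (c - 1) * p))] at h3
      have h4 : a n * (c - 1) * p ≤ (c - 1) * p / 4 := by
        have := (mul_le_mul_iff_right₀ hqn).mp (by linarith : q ^ n * (a n * (c - 1) * p) ≤ q ^ n * ((c - 1) * p / 4))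
        linarith
      nlinarith [mul_pos (mul_pos (show (0:ℝ) < a n - 1/4 by linarith) (show (0:ℝ) < c - 1 by linarith)) hp]
end

section
/- Let D be a distribution supported on ℕ (positive integers) with Pr[X ≥ n] = 2/(n+1) for all n ≥ 1. Then D is a well-defined probability distribution with Pr[X = n] = 2/((n+1)(n+2)), the revenue of each integer price n is Rev_D(n) = 2n/(n+1) < 2, opt_D = 2, and opt_D is not attained by any price. -/
open MeasureTheory Filter

/-- The distribution on the positive integers with `Pr[X = n] = 2/((n+1)(n+2))`
(indexed here by `n+1`, `n : ℕ`, so the point `n+1` gets mass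
`2/((n+2)(n+3))`). -/
noncomputable def D12 : Measure ℝ :=
  Measure.sum (fun n : ℕ =>
    (ENNReal.ofReal (2 / ((n + 2) * (n + 3)))) • Measure.dirac ((n : ℝ) + 1))

noncomputable def c12 (k : ℕ) : ℝ := 2 / ((k + 2) * (k + 3))

lemma c12_nonneg (k : ℕ) : 0 ≤ c12 k := by unfold c12; positivity

lemma c12_eq (k : ℕ) : c12 k = 2/((k:ℝ)+2) - 2/((k:ℝ)+3) := by
  unfold c12
  have h2 : ((k:ℝ)+2) ≠ 0 := by positivity
  have h3 : ((k:ℝ)+3) ≠ 0 := by positivity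
  field_simp
  ring

lemma tail_hasSum (m : ℕ) : HasSum (fun k : ℕ => c12 (k + m)) (2 / ((m:ℝ) + 2)) := by
  rw [hasSum_iff_tendsto_nat_of_nonneg (fun k => c12_nonneg _)]
  have hps : ∀ N : ℕ, ∑ k ∈ Finset.range N, c12 (k+m)
      = 2/((m:ℝ)+2) - 2/(((N:ℝ)+(m:ℝ))+2) := by
    intro N
    have h := Finset.sum_range_sub' (f := fun k : ℕ => 2/((k:ℝ)+(m:ℝ)+2)) N
    push_cast at h
    rw [show (2:ℝ)/(↑m+2) - 2/(↑N+↑m+2) = 2/(0+↑m+2) - 2/(↑N+↑m+2) by norm_num, ← h]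
    apply Finset.sum_congr rfl
    intro k _
    rw [c12_eq]
    push_cast
    ring_nf
  simp only [hps]
  have h1 : Tendsto (fun N : ℕ => ((N:ℝ)+(m:ℝ))+2) atTop atTop := by
    apply tendsto_atTop_add_const_right
    exact tendsto_atTop_add_const_right _ _ tendsto_natCast_atTop_atTop
  have h2 : Tendsto (fun N : ℕ => 2/(((N:ℝ)+(m:ℝ))+2)) atTop (nhds 0) := by
    simp only [div_eq_mul_inv]
    rw [show (0:ℝ) = 2 * 0 by ring]
    exact (h1.inv_tendsto_atTop).const_mul 2
  have h3 := ((tendsto_const_nhds : Tendsto (fun _ : ℕ => 2/((m:ℝ)+2)) atTop (nhds (2/((m:ℝ)+2))))).sub h2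
  simpa using h3

lemma c12_summable : Summable c12 := by
  have h := (tail_hasSum 0).summable
  simpa using h

lemma ind_nonneg {s : Set ℝ} (k : ℕ) (x : ℝ) :
    0 ≤ s.indicator (fun _ => c12 k) x :=
  Set.indicator_nonneg (fun _ _ => c12_nonneg k) x

lemma ind_le {s : Set ℝ} (k : ℕ) (x : ℝ) :
    s.indicator (fun _ => c12 k) x ≤ c12 k := by
  by_cases h : x ∈ s
  · rw [Set.indicator_of_mem h]
  · rw [Set.indicator_of_notMem h]; exact c12_nonneg k

lemma ind_summable {s : Set ℝ} :
    Summable (fun k : ℕ => s.indicator (fun _ => c12 k) ((k:ℝ)+1)) :=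
  Summable.of_nonneg_of_le (fun k => ind_nonneg k _) (fun k => ind_le k _) c12_summable

lemma D12_apply {s : Set ℝ} (hs : MeasurableSet s) :
    D12 s = ENNReal.ofReal (∑' k : ℕ, s.indicator (fun _ => c12 k) ((k:ℝ)+1)) := by
  rw [D12, Measure.sum_apply _ hs]
  have step : ∀ k : ℕ, ((ENNReal.ofReal (2 / ((k + 2) * (k + 3)))) • Measure.dirac ((k:ℝ)+1)) s
      = ENNReal.ofReal (s.indicator (fun _ => c12 k) ((k:ℝ)+1)) := by
    intro k
    rw [Measure.smul_apply, smul_eq_mul, Measure.dirac_apply' _ hs]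
    by_cases h : ((k:ℝ)+1) ∈ s
    · rw [Set.indicator_of_mem h, Set.indicator_of_mem h, Pi.one_apply, mul_one]
      rfl
    · rw [Set.indicator_of_notMem h, Set.indicator_of_notMem h, mul_zero, ENNReal.ofReal_zero]
  simp_rw [step]
  rw [← ENNReal.ofReal_tsum_of_nonneg (fun k => ind_nonneg k _) ind_summable]

lemma D12_toReal {s : Set ℝ} (hs : MeasurableSet s) :
    (D12 s).toReal = ∑' k : ℕ, s.indicator (fun _ => c12 k) ((k:ℝ)+1) := by
  rw [D12_apply hs, ENNReal.toReal_ofReal (tsum_nonneg (fun k => ind_nonneg k _))]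

lemma D12_prob : IsProbabilityMeasure D12 := by
  constructor
  rw [D12_apply MeasurableSet.univ]
  simp only [Set.indicator_univ]
  rw [show (∑' k : ℕ, c12 k) = 1 by simpa using (tail_hasSum 0).tsum_eq]
  exact ENNReal.ofReal_one

lemma D12_Ici (m : ℕ) (p : ℝ) (hp1 : (m:ℝ) < p) (hp2 : p ≤ (m:ℝ)+1) :
    (D12 {v : ℝ | p ≤ v}).toReal = 2/((m:ℝ)+2) := by
  rw [D12_toReal (show MeasurableSet {v : ℝ | p ≤ v} from measurableSet_Ici)]
  have key : ∀ k : ℕ, ({v : ℝ | p ≤ v}).indicator (fun _ => c12 k) ((k:ℝ)+1)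
      = if m ≤ k then c12 k else 0 := by
    intro k
    by_cases hk : m ≤ k
    · rw [if_pos hk, Set.indicator_of_mem]
      have : (m:ℝ) ≤ k := by exact_mod_cast hk
      exact le_trans hp2 (by linarith)
    · rw [if_neg hk, Set.indicator_of_notMem]
      simp only [Set.mem_setOf_eq, not_le]
      have : (k:ℝ)+1 ≤ m := by exact_mod_cast Nat.lt_of_not_le hk
      linarith
  simp_rw [key]
  have hsum : Summable (fun k : ℕ => if m ≤ k then c12 k else 0) := by
    apply Summable.of_nonneg_of_le (fun k => ?_) (fun k => ?_) c12_summable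
    · split <;> simp [c12_nonneg]
    · split
      · exact le_rfl
      · exact c12_nonneg k
  rw [← Summable.sum_add_tsum_nat_add m hsum]
  have h0 : ∑ i ∈ Finset.range m, (if m ≤ i then c12 i else 0) = 0 := by
    apply Finset.sum_eq_zero
    intro i hi
    rw [if_neg (Nat.not_le.2 (Finset.mem_range.1 hi))]
  rw [h0, zero_add]
  have h1 : (fun k : ℕ => if m ≤ k + m then c12 (k+m) else 0) = fun k => c12 (k+m) := by
    funext k; rw [if_pos (Nat.le_add_left m k)]
  rw [h1, (tail_hasSum m).tsum_eq]

lemma D12_singleton (m : ℕ) : (D12 {((m:ℝ)+1)}).toReal = c12 m := by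
  rw [D12_toReal (measurableSet_singleton _)]
  have key : ∀ k : ℕ, ({((m:ℝ)+1)} : Set ℝ).indicator (fun _ => c12 k) ((k:ℝ)+1)
      = if k = m then c12 m else 0 := by
    intro k
    by_cases hk : k = m
    · subst hk; rw [if_pos rfl, Set.indicator_of_mem (Set.mem_singleton _)]
    · rw [if_neg hk, Set.indicator_of_notMem]
      simp only [Set.mem_singleton_iff]
      intro h
      exact hk (by exact_mod_cast (by linarith : (k:ℝ) = m))
  simp_rw [key]
  exact tsum_ite_eq m (fun _ => c12 m)

/-- `D12` is a probability distribution with `Pr[X = n] = 2/((n+1)(n+2))` and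
`Pr[X ≥ n] = 2/(n+1)` for integers `n ≥ 1`; the revenue of integer price `n`
is `2n/(n+1) < 2`; every real price `p ≥ 0` has revenue `< 2`; and the
supremum of the revenue is `2` (hence not attained). -/
theorem stmt12 :
    (∑' n : ℕ, (2:ℝ) / ((n + 2) * (n + 3)) = 1) ∧
    IsProbabilityMeasure D12 ∧
    (∀ n : ℕ, 1 ≤ n → (D12 {((n : ℝ))}).toReal = 2 / ((n + 1) * (n + 2))) ∧
    (∀ n : ℕ, 1 ≤ n → (D12 {v : ℝ | (n:ℝ) ≤ v}).toReal = 2 / (n + 1)) ∧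
    (∀ n : ℕ, 1 ≤ n →
      (n:ℝ) * (D12 {v : ℝ | (n:ℝ) ≤ v}).toReal = 2 * n / (n + 1) ∧
      2 * (n:ℝ) / (n + 1) < 2) ∧
    (∀ p : ℝ, 0 ≤ p → p * (D12 {v : ℝ | p ≤ v}).toReal < 2) ∧
    (∀ ε : ℝ, 0 < ε → ∃ p : ℝ, 0 ≤ p ∧ 2 - ε < p * (D12 {v : ℝ | p ≤ v}).toReal) := by
  have hIci : ∀ n : ℕ, 1 ≤ n → (D12 {v : ℝ | (n:ℝ) ≤ v}).toReal = 2 / ((n:ℝ) + 1) := by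
    intro n hn
    obtain ⟨m, rfl⟩ := Nat.exists_eq_add_of_le hn
    rw [D12_Ici m _ (by push_cast; linarith) (by push_cast; linarith)]
    push_cast; ring_nf
  refine ⟨?_, D12_prob, ?_, hIci, ?_, ?_, ?_⟩
  · have h := (tail_hasSum 0).tsum_eq
    simp only [Nat.add_zero, Nat.cast_zero] at h
    norm_num at h
    exact h
  · intro n hn
    obtain ⟨m, rfl⟩ := Nat.exists_eq_add_of_le hn
    have h : ((1+m : ℕ) : ℝ) = (m:ℝ) + 1 := by push_cast; ring
    rw [h, D12_singleton]
    unfold c12; push_cast; ring_nf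
  · intro n hn
    refine ⟨by rw [hIci n hn]; ring, ?_⟩
    have h : (0:ℝ) < (n:ℝ)+1 := by positivity
    rw [div_lt_iff₀ h]
    have : (0:ℝ) ≤ n := Nat.cast_nonneg n
    linarith
  · intro p hp
    by_cases hp1 : p ≤ 1
    · have hb : (D12 {v:ℝ|p ≤ v}).toReal ≤ 1 := by
        haveI := D12_prob
        have h := prob_le_one (μ := D12) (s := {v:ℝ|p ≤ v})
        have := ENNReal.toReal_mono ENNReal.one_ne_top h
        simpa using this
      nlinarith [ENNReal.toReal_nonneg (a := D12 {v:ℝ|p ≤ v})]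
    · push_neg at hp1
      set m := ⌈p⌉₊ - 1 with hm
      have hceil : 1 ≤ ⌈p⌉₊ := Nat.one_le_ceil_iff.2 (by linarith)
      have hcast : (m:ℝ) = (⌈p⌉₊:ℝ) - 1 := by
        rw [hm, Nat.cast_sub hceil, Nat.cast_one]
      have hlt := Nat.ceil_lt_add_one hp
      have hle := Nat.le_ceil p
      have h1 : (m:ℝ) < p := by rw [hcast]; linarith
      have h2 : p ≤ (m:ℝ)+1 := by rw [hcast]; linarith
      rw [D12_Ici m p h1 h2]
      have hm2 : (0:ℝ) < (m:ℝ)+2 := by positivity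
      rw [← mul_div_assoc, div_lt_iff₀ hm2]
      linarith
  · intro ε hε
    obtain ⟨n, hn⟩ := exists_nat_gt (2/ε)
    have hnp : (0:ℝ) < n := lt_trans (by positivity) hn
    have hn1 : 1 ≤ n := by exact_mod_cast Nat.one_le_cast.2 (by exact_mod_cast hnp)
    refine ⟨n, Nat.cast_nonneg n, ?_⟩
    rw [hIci n hn1]
    have hn1' : (0:ℝ) < (n:ℝ)+1 := by positivity
    have h2n : 2 < (n:ℝ) * ε := by rw [div_lt_iff₀ hε] at hn; linarith
    have key : 2/((n:ℝ)+1) < ε := by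
      rw [div_lt_iff₀ hn1']; nlinarith
    have heq : (n:ℝ) * (2/((n:ℝ)+1)) = 2 - 2/((n:ℝ)+1) := by field_simp; ring
    rw [heq]; linarith
end

section
/- Let D be a probability distribution on [0,1], let opt = sup_t t·D([t,1]), T(ε) = {t : t·D([t,1]) ≥ opt − ε}, T* = T(0), and Δ(ε) = sup_{t∈T(ε)} inf_{t'∈T*} max{|t−t'|, min(t,t')·D([min(t,t'), max(t,t')))}. Then Δ(ε) → 0 as ε → 0. -/
open MeasureTheory Filter

set_option maxHeartbeats 1000000 in
/-- For a probability distribution `μ` on `[0,1]`, with `opt = sup_t t·μ([t,1])`,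
`T(ε)` the set of `ε`-optimal prices, `T* = T(0)`, and
`Δ(ε) = sup_{t ∈ T(ε)} inf_{t' ∈ T*} max{|t − t'|, min(t,t')·μ([min(t,t'), max(t,t')))}`,
we have `Δ(ε) → 0` as `ε → 0⁺`. -/
theorem stmt15 (μ : Measure ℝ) [IsProbabilityMeasure μ]
    (hμ : μ ((Set.Icc (0:ℝ) 1)ᶜ) = 0)
    (g : ℝ → ℝ) (hg : ∀ t, g t = t * (μ (Set.Icc t 1)).toReal)
    (opt : ℝ) (hopt : opt = sSup (g '' Set.Icc (0:ℝ) 1))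
    (T : ℝ → Set ℝ)
    (hT : ∀ ε, T ε = {t ∈ Set.Icc (0:ℝ) 1 | opt - ε ≤ g t})
    (dist2 : ℝ → ℝ → ℝ)
    (hdist : ∀ t t', dist2 t t' =
      max |t - t'| (min t t' * (μ (Set.Ico (min t t') (max t t'))).toReal))
    (Delta : ℝ → ℝ)
    (hDelta : ∀ ε, Delta ε = sSup ((fun t => sInf ((dist2 t) '' (T 0))) '' (T ε))) :
    Tendsto Delta (nhdsWithin 0 (Set.Ioi 0)) (nhds 0) := by
  set G : ℝ → ℝ := fun t => (μ (Set.Icc t 1)).toReal with hGdef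
  set f : ℝ → ℝ := fun t => sInf ((dist2 t) '' (T 0)) with hfdef
  have hG0 : ∀ t, 0 ≤ G t := fun t => ENNReal.toReal_nonneg
  have hG1 : ∀ t, G t ≤ 1 := by
    intro t
    have h1 : μ (Set.Icc t 1) ≤ 1 := prob_le_one
    have := ENNReal.toReal_mono (by simp) h1
    simpa using this
  have hGanti : Antitone G := fun a b hab =>
    ENNReal.toReal_mono (measure_ne_top _ _) (measure_mono (Set.Icc_subset_Icc_left hab))
  have hgG : ∀ t, g t = t * G t := fun t => hg t
  have hIco : ∀ a b : ℝ, a ≤ b → b ≤ 1 → (μ (Set.Ico a b)).toReal = G a - G b := by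
    intro a b hab hb1
    have hd : Disjoint (Set.Ico a b) (Set.Icc b 1) := by
      rw [Set.disjoint_left]
      rintro x ⟨_, h2⟩ ⟨h3, _⟩
      exact absurd h3 (not_le.2 h2)
    have hu := measure_union (μ := μ) hd measurableSet_Icc
    rw [Set.Ico_union_Icc_eq_Icc hab hb1] at hu
    have h2 : G a = (μ (Set.Ico a b)).toReal + G b := by
      show (μ (Set.Icc a 1)).toReal = _ + (μ (Set.Icc b 1)).toReal
      rw [hu, ENNReal.toReal_add (measure_ne_top _ _) (measure_ne_top _ _)]
    linarith
  have hsing : ∀ b : ℝ, b ≤ 1 → (μ {b}).toReal + (μ (Set.Ioc b 1)).toReal = G b := by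
    intro b hb1
    have hd : Disjoint ({b} : Set ℝ) (Set.Ioc b 1) := by
      rw [Set.disjoint_left]
      rintro x hx ⟨h1, _⟩
      rw [Set.mem_singleton_iff] at hx
      subst hx
      exact lt_irrefl _ h1
    have hu := measure_union (μ := μ) hd measurableSet_Ioc
    rw [← Set.insert_eq, Set.Ioc_insert_left hb1] at hu
    show _ = (μ (Set.Icc b 1)).toReal
    rw [hu, ENNReal.toReal_add (measure_ne_top _ _) (measure_ne_top _ _)]
  -- basic facts about opt
  have himg_ne : (g '' Set.Icc (0:ℝ) 1).Nonempty :=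
    ⟨g 0, Set.mem_image_of_mem _ (by constructor <;> norm_num)⟩
  have hbdd : BddAbove (g '' Set.Icc (0:ℝ) 1) := by
    refine ⟨1, ?_⟩
    rintro y ⟨t, ht, rfl⟩
    rw [hgG]
    nlinarith [hG0 t, hG1 t, ht.1, ht.2]
  have hopt_ub : ∀ t ∈ Set.Icc (0:ℝ) 1, g t ≤ opt := by
    intro t ht
    rw [hopt]
    exact le_csSup hbdd (Set.mem_image_of_mem _ ht)
  have hopt0 : 0 ≤ opt := by
    have := hopt_ub 0 (by constructor <;> norm_num)
    rw [hgG] at this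
    linarith
  have hopt1 : opt ≤ 1 := by
    rw [hopt]
    refine csSup_le himg_ne ?_
    rintro y ⟨t, ht, rfl⟩
    rw [hgG]
    nlinarith [hG0 t, hG1 t, ht.1, ht.2]
  -- facts about f and dist2
  have hdist_nonneg : ∀ t t', 0 ≤ dist2 t t' := by
    intro t t'
    rw [hdist]
    exact le_trans (abs_nonneg _) (le_max_left _ _)
  have hf_nonneg : ∀ t, 0 ≤ f t := by
    intro t
    apply Real.sInf_nonneg
    rintro x ⟨t', _, rfl⟩
    exact hdist_nonneg t t'
  have hf_le : ∀ t t', t' ∈ T 0 → f t ≤ dist2 t t' := by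
    intro t t' h
    exact csInf_le ⟨0, by rintro x ⟨u, _, rfl⟩; exact hdist_nonneg t u⟩ (Set.mem_image_of_mem _ h)
  have hT0mem : ∀ b, b ∈ Set.Icc (0:ℝ) 1 → opt ≤ g b → b ∈ T 0 := by
    intro b h1 h2
    rw [hT]
    exact ⟨h1, by linarith⟩
  have hTmono : ∀ x y : ℝ, x ≤ y → T x ⊆ T y := by
    intro x y hxy t
    rw [hT, hT]
    rintro ⟨h1, h2⟩
    exact ⟨h1, by linarith⟩
  -- limit lemma
  have hlim : ∀ (S : ℕ → Set ℝ), (∀ n, MeasurableSet (S n)) → Antitone S → ∀ c > (0:ℝ),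
      ∃ n : ℕ, (μ (S n)).toReal ≤ (μ (⋂ n, S n)).toReal + c := by
    intro S hmeas hanti c hc
    have h1 : Tendsto (fun n => μ (S n)) atTop (nhds (μ (⋂ n, S n))) :=
      tendsto_measure_iInter_atTop (fun n => (hmeas n).nullMeasurableSet) hanti ⟨0, measure_ne_top _ _⟩
    have h2 : Tendsto (fun n => (μ (S n)).toReal) atTop (nhds ((μ (⋂ n, S n)).toReal)) :=
      (ENNReal.tendsto_toReal (measure_ne_top _ _)).comp h1
    obtain ⟨n, hn⟩ := (h2.eventually_lt_const (lt_add_of_pos_right _ hc)).exists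
    exact ⟨n, hn.le⟩
  have hleft : ∀ b : ℝ, ∀ c > (0:ℝ), ∃ η > (0:ℝ), G (b - η) ≤ G b + c := by
    intro b c hc
    obtain ⟨n, hn⟩ := hlim (fun n => Set.Icc (b - 1/((n:ℝ)+1)) 1)
      (fun n => measurableSet_Icc)
      (by
        intro m n hmn
        apply Set.Icc_subset_Icc_left
        have h1 : (1:ℝ)/((n:ℝ)+1) ≤ 1/((m:ℝ)+1) := by
          apply one_div_le_one_div_of_le (by positivity)
          have : (m:ℝ) ≤ (n:ℝ) := Nat.cast_le.2 hmn
          linarith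
        linarith) c hc
    have hI : ⋂ n : ℕ, Set.Icc (b - 1/((n:ℝ)+1)) 1 = Set.Icc b 1 := by
      ext x
      simp only [Set.mem_iInter, Set.mem_Icc]
      constructor
      · intro h
        refine ⟨?_, (h 0).2⟩
        by_contra hx
        push_neg at hx
        obtain ⟨n, hn2⟩ := exists_nat_one_div_lt (sub_pos.2 hx)
        have := (h n).1
        linarith
      · intro h n
        have h2 : (0:ℝ) < 1/((n:ℝ)+1) := by positivity
        exact ⟨by linarith [h.1], h.2⟩
    rw [hI] at hn
    exact ⟨1/((n:ℝ)+1), by positivity, hn⟩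
  have hright : ∀ b : ℝ, ∀ c > (0:ℝ), ∃ η > (0:ℝ),
      (μ (Set.Ico b (b + η))).toReal ≤ (μ {b}).toReal + c := by
    intro b c hc
    obtain ⟨n, hn⟩ := hlim (fun n => Set.Ico b (b + 1/((n:ℝ)+1)))
      (fun n => measurableSet_Ico)
      (by
        intro m n hmn
        apply Set.Ico_subset_Ico_right
        have h1 : (1:ℝ)/((n:ℝ)+1) ≤ 1/((m:ℝ)+1) := by
          apply one_div_le_one_div_of_le (by positivity)
          have : (m:ℝ) ≤ (n:ℝ) := Nat.cast_le.2 hmn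
          linarith
        linarith)
      c hc
    have hI : ⋂ n : ℕ, Set.Ico b (b + 1/((n:ℝ)+1)) = {b} := by
      ext x
      simp only [Set.mem_iInter, Set.mem_Ico, Set.mem_singleton_iff]
      constructor
      · intro h
        have hbx : b ≤ x := (h 0).1
        rcases eq_or_lt_of_le hbx with h' | h'
        · exact h'.symm
        · exfalso
          obtain ⟨n, hn2⟩ := exists_nat_one_div_lt (sub_pos.2 h')
          have := (h n).2
          linarith
      · rintro rfl n
        have h2 : (0:ℝ) < 1/((n:ℝ)+1) := by positivity
        exact ⟨le_refl _, by linarith⟩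
    rw [hI] at hn
    exact ⟨1/((n:ℝ)+1), by positivity, hn⟩
  -- the key local lemma
  have key : ∀ δ > (0:ℝ), ∀ b ∈ Set.Icc (0:ℝ) 1, ∃ ε > (0:ℝ), ∃ η > (0:ℝ),
      ∀ t ∈ Set.Icc (0:ℝ) 1, |t - b| < η → opt - ε ≤ g t → f t ≤ δ := by
    intro δ hδ b hb
    obtain ⟨hb0, hb1⟩ := hb
    by_cases hgb : opt ≤ g b
    · -- b is optimal
      have hbT0 : b ∈ T 0 := hT0mem b ⟨hb0, hb1⟩ hgb
      have hgbopt : g b = opt := le_antisymm (hopt_ub b ⟨hb0, hb1⟩) hgb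
      obtain ⟨ηL, hηL, hGL⟩ := hleft b δ hδ
      have hLside : ∀ t, 0 ≤ t → t ≤ b → |t - b| < min δ ηL → f t ≤ δ := by
        intro t ht0 htb habs
        have h1 : f t ≤ dist2 t b := hf_le t b hbT0
        rw [hdist, min_eq_left htb, max_eq_right htb] at h1
        have habs2 := abs_lt.1 habs
        have hd1 : |t - b| ≤ δ := le_of_lt (lt_of_lt_of_le habs (min_le_left _ _))
        have hGt : G t ≤ G (b - ηL) := hGanti (by
          have := lt_of_lt_of_le habs (min_le_right _ _)
          have := abs_lt.1 this
          linarith)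
        have hX0 : 0 ≤ G t - G b := sub_nonneg.2 (hGanti htb)
        have hXδ : G t - G b ≤ δ := by linarith
        have h2 : t * (μ (Set.Ico t b)).toReal ≤ δ := by
          rw [hIco t b htb hb1]
          nlinarith [mul_nonneg (show (0:ℝ) ≤ 1 - t by linarith) hX0]
        exact le_trans h1 (max_le hd1 h2)
      by_cases hA : opt ≤ b * (μ (Set.Ioc b 1)).toReal
      · -- no atom contribution: include on both sides
        have hm0 : 0 ≤ b * (μ {b}).toReal := mul_nonneg hb0 ENNReal.toReal_nonneg
        have hbm : b * (μ {b}).toReal = 0 := by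
          have hs := hsing b hb1
          have h1 : g b = b * (μ {b}).toReal + b * (μ (Set.Ioc b 1)).toReal := by
            rw [hgG, ← hs]; ring
          exact le_antisymm (by linarith) hm0
        obtain ⟨ηR, hηR, hGR⟩ := hright b δ hδ
        refine ⟨1, one_pos, min δ (min ηL ηR), lt_min hδ (lt_min hηL hηR), ?_⟩
        intro t ht htn _
        rcases le_total t b with htb | hbt
        · exact hLside t ht.1 htb (lt_of_lt_of_le htn (min_le_min (le_refl _) (min_le_left _ _)))
        · have h1 : f t ≤ dist2 t b := hf_le t b hbT0
          rw [hdist, min_eq_right hbt, max_eq_left hbt] at h1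
          have habs : |t - b| ≤ δ := le_of_lt (lt_of_lt_of_le htn (min_le_left _ _))
          have htη : t ≤ b + ηR := by
            have h3 : |t - b| < ηR :=
              lt_of_lt_of_le htn (le_trans (min_le_right _ _) (min_le_right _ _))
            have := abs_lt.1 h3
            linarith
          have h3 : (μ (Set.Ico b t)).toReal ≤ (μ (Set.Ico b (b + ηR))).toReal :=
            ENNReal.toReal_mono (measure_ne_top _ _)
              (measure_mono (Set.Ico_subset_Ico_right htη))
          have h4 : b * (μ (Set.Ico b t)).toReal ≤ b * ((μ {b}).toReal + δ) :=
            mul_le_mul_of_nonneg_left (le_trans h3 hGR) hb0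
          have h5 : b * ((μ {b}).toReal + δ) = b * (μ {b}).toReal + b * δ := by ring
          have h6 : b * δ ≤ δ := by nlinarith
          have h2 : b * (μ (Set.Ico b t)).toReal ≤ δ := by linarith
          exact le_trans h1 (max_le habs h2)
      · -- atom at b: exclude on the right, include on the left
        push_neg at hA
        set E := (opt - b * (μ (Set.Ioc b 1)).toReal) / 3 with hE
        have hEpos : 0 < E := by rw [hE]; linarith
        refine ⟨E, hEpos, min E (min δ ηL), lt_min hEpos (lt_min hδ hηL), ?_⟩
        intro t ht htn hnear
        rcases le_or_gt t b with htb | hbt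
        · exact hLside t ht.1 htb (lt_of_lt_of_le htn (min_le_right _ _))
        · exfalso
          have hGt : G t ≤ (μ (Set.Ioc b 1)).toReal :=
            ENNReal.toReal_mono (measure_ne_top _ _)
              (measure_mono (fun x hx => ⟨lt_of_lt_of_le hbt hx.1, hx.2⟩))
          have hgt : g t ≤ t * (μ (Set.Ioc b 1)).toReal := by
            rw [hgG]
            exact mul_le_mul_of_nonneg_left hGt ht.1
          have hEt : t - b < E :=
            lt_of_le_of_lt (le_abs_self _) (lt_of_lt_of_le htn (min_le_left _ _))
          have hc1 : (μ (Set.Ioc b 1)).toReal ≤ 1 := by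
            have h1 : μ (Set.Ioc b 1) ≤ 1 := prob_le_one
            have := ENNReal.toReal_mono (by simp) h1
            simpa using this
          have hc0 : 0 ≤ (μ (Set.Ioc b 1)).toReal := ENNReal.toReal_nonneg
          nlinarith [mul_nonneg (sub_nonneg.2 hbt.le) (sub_nonneg.2 hc1)]
    · -- b is suboptimal: exclude everywhere near b
      push_neg at hgb
      set E := (opt - g b) / 5 with hE
      have hEpos : 0 < E := by rw [hE]; linarith
      obtain ⟨ηL, hηL, hGL⟩ := hleft b E hEpos
      refine ⟨E, hEpos, min E ηL, lt_min hEpos hηL, ?_⟩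
      intro t ht htn hnear
      exfalso
      have habs := abs_lt.1 htn
      have h1 : b - ηL ≤ t := by
        have := min_le_right E ηL
        linarith
      have h2 : t ≤ b + E := by
        have := min_le_left E ηL
        linarith
      have hGt : G t ≤ G b + E := le_trans (hGanti h1) hGL
      have ha : t * G t ≤ t * (G b + E) := mul_le_mul_of_nonneg_left hGt ht.1
      have hGbE : 0 ≤ G b + E := by linarith [hG0 b]
      have hbb : t * (G b + E) ≤ (b + E) * (G b + E) := mul_le_mul_of_nonneg_right h2 hGbE
      have e1 : b * E ≤ E := by nlinarith
      have e2 : E * G b ≤ E := by nlinarith [hG1 b, hG0 b]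
      have hgb0 : 0 ≤ g b := by rw [hgG]; exact mul_nonneg hb0 (hG0 b)
      have e3 : E * E ≤ E := by nlinarith [hEpos, hopt1, hgb0]
      have e4 : (b + E) * (G b + E) = b * G b + b * E + E * G b + E * E := by ring
      have hgt := hgG t
      have hgb' := hgG b
      linarith
  -- assemble by compactness
  have cover : ∀ δ > (0:ℝ), ∃ ε > (0:ℝ), ∀ t ∈ T ε, f t ≤ δ := by
    intro δ hδ
    have key' := key δ hδ
    choose! eps heps eta heta hloc using key'
    obtain ⟨F, hFmem, hFcov⟩ := isCompact_Icc.elim_nhds_subcover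
      (fun b => Metric.ball b (eta b)) (fun b hb => Metric.ball_mem_nhds b (heta b hb))
    have hFne : F.Nonempty := by
      rcases Finset.eq_empty_or_nonempty F with h | h
      · exfalso
        subst h
        have h0 : (0:ℝ) ∈ Set.Icc (0:ℝ) 1 := by constructor <;> norm_num
        have := hFcov h0
        simp at this
      · exact h
    refine ⟨F.inf' hFne eps, ?_, ?_⟩
    · rw [gt_iff_lt, Finset.lt_inf'_iff]
      intro b hbF
      exact heps b (hFmem b hbF)
    · intro t htT
      have htT' := htT
      rw [hT] at htT'
      have htI : t ∈ Set.Icc (0:ℝ) 1 := htT'.1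
      have := hFcov htI
      rw [Set.mem_iUnion₂] at this
      obtain ⟨b, hbF, htb⟩ := this
      apply hloc b (hFmem b hbF) t htI
      · rw [Metric.mem_ball, Real.dist_eq] at htb
        exact htb
      · have h2 : opt - F.inf' hFne eps ≤ g t := htT'.2
        have h3 : F.inf' hFne eps ≤ eps b := Finset.inf'_le _ hbF
        linarith
  -- conclude
  rw [Metric.tendsto_nhdsWithin_nhds]
  intro δ hδ
  obtain ⟨ε, hε, hcov⟩ := cover (δ/2) (by linarith)
  refine ⟨ε, hε, ?_⟩
  intro x hx hdx
  rw [Real.dist_eq, sub_zero] at hdx ⊢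
  have hx0 : (0:ℝ) < x := hx
  have hxε : x ≤ ε := by
    rw [abs_of_pos hx0] at hdx
    exact hdx.le
  have hTne : (T x).Nonempty := by
    have hlt : opt - x < sSup (g '' Set.Icc (0:ℝ) 1) := by rw [← hopt]; linarith
    obtain ⟨y, ⟨t, htI, rfl⟩, hy⟩ := exists_lt_of_lt_csSup himg_ne hlt
    exact ⟨t, by rw [hT]; exact ⟨htI, hy.le⟩⟩
  obtain ⟨t0, ht0⟩ := hTne
  have hbound : ∀ y ∈ f '' T x, y ≤ δ/2 := by
    rintro y ⟨t, htT, rfl⟩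
    exact hcov t (hTmono x ε hxε htT)
  have hne' : (f '' T x).Nonempty := ⟨f t0, Set.mem_image_of_mem _ ht0⟩
  have h1 : sSup (f '' T x) ≤ δ/2 := csSup_le hne' hbound
  have h2 : 0 ≤ sSup (f '' T x) :=
    le_trans (hf_nonneg t0) (le_csSup ⟨δ/2, hbound⟩ (Set.mem_image_of_mem _ ht0))
  rw [hDelta]
  have hDe : sSup ((fun t => sInf ((dist2 t) '' (T 0))) '' (T x)) = sSup (f '' T x) := rfl
  rw [hDe, abs_of_nonneg h2]
  linarith
end

section
/- Let x ∈ (1/2,1], q ≥ 1/2, p > 0 small, x_{p,q} = qx/(p+q), and γ > 0 with γ ≪ p, γ ≪ x − x_{p,q}, and 5γ² < γ/4. Let D be a probability measure on [0,1] with D((x−γ²,1]) ∈ [q, q+γ²], D([x_{p,q}−γ², x_{p,q}+γ²)) ∈ [p − γ − γ², p − γ + γ²], and D([x_{p,q}+γ², x−γ²]) = 0, and additionally x_{p,q} ≤ x − 4γ − 2γ². Then every price t' with x_{p,q} + γ² ≤ t' ≤ (x_{p,q}+x)/2 satisfies t'·D([t',1]) ≤ max_t t·D([t,1]) − γ. 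-/
open MeasureTheory

/-- First case of the uniform lower-bound gadget (family `𝒟₋₁`): with
`x ∈ (1/2,1]`, `q ≥ 1/2`, `p > 0`, `xpq = qx/(p+q)`, and `γ > 0` small
(`γ < p`, `xpq ≤ x − 4γ − 2γ²`, `5γ² < γ/4`), if a probability measure `μ` on
`[0,1]` satisfies `μ((x−γ²,1]) ∈ [q, q+γ²]`,
`μ([xpq−γ², xpq+γ²)) ∈ [p−γ−γ², p−γ+γ²]`, and `μ([xpq+γ², x−γ²]) = 0`,
then every price `t'` with `xpq + γ² ≤ t' ≤ (xpq+x)/2` satisfies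
`t'·μ([t',1]) ≤ max_t t·μ([t,1]) − γ`. -/
theorem stmt17 (x q p γ : ℝ) (μ : Measure ℝ) [IsProbabilityMeasure μ]
    (hx : x ∈ Set.Ioc (1/2:ℝ) 1) (hq : 1/2 ≤ q) (hp : 0 < p)
    (xpq : ℝ) (hxpq : xpq = q * x / (p + q))
    (hγ : 0 < γ) (hγp : γ < p)
    (hγx : xpq ≤ x - 4*γ - 2*γ^2) (hγ2 : 5 * γ^2 < γ / 4)
    (hμsupp : μ ((Set.Icc (0:ℝ) 1)ᶜ) = 0)
    (h1 : (μ (Set.Ioc (x - γ^2) 1)).toReal ∈ Set.Icc q (q + γ^2))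
    (h2 : (μ (Set.Ico (xpq - γ^2) (xpq + γ^2))).toReal ∈
            Set.Icc (p - γ - γ^2) (p - γ + γ^2))
    (h3 : μ (Set.Icc (xpq + γ^2) (x - γ^2)) = 0) :
    ∀ t' : ℝ, xpq + γ^2 ≤ t' → t' ≤ (xpq + x)/2 →
      t' * (μ (Set.Icc t' 1)).toReal ≤
        sSup ((fun t => t * (μ (Set.Icc t 1)).toReal) '' Set.Icc (0:ℝ) 1) - γ := by

  intro t' ht1 ht2
  have hγ20 : γ < 1/20 := by nlinarith
  have hγsq : γ^2 < γ/20 := by nlinarith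
  have hpq : 0 < p + q := by linarith
  have hxpq0 : 0 ≤ xpq := by
    rw [hxpq]; apply div_nonneg (by nlinarith [hx.1]) hpq.le
  have ht0 : 0 ≤ t' := by nlinarith
  have htx : t' ≤ x - γ^2 - 2*γ := by linarith
  have hx0 : 0 ≤ x - γ^2 := by nlinarith [hx.1]
  have hx1 : x - γ^2 ≤ 1 := by nlinarith [hx.2]
  set m : ℝ := (μ (Set.Icc (x - γ^2) 1)).toReal with hm
  have hmq : q ≤ m := by
    refine le_trans h1.1 (ENNReal.toReal_mono (measure_ne_top μ _) ?_)
    exact measure_mono Set.Ioc_subset_Icc_self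
  have hμle : (μ (Set.Icc t' 1)).toReal ≤ m := by
    refine ENNReal.toReal_mono (measure_ne_top μ _) ?_
    have hsub : Set.Icc t' 1 ⊆ Set.Icc (xpq + γ^2) (x - γ^2) ∪ Set.Icc (x - γ^2) 1 := by
      intro y hy
      by_cases h : y ≤ x - γ^2
      · exact Or.inl ⟨le_trans ht1 hy.1, h⟩
      · exact Or.inr ⟨le_of_not_ge h, hy.2⟩
    calc μ (Set.Icc t' 1) ≤ μ (Set.Icc (xpq + γ^2) (x - γ^2) ∪ Set.Icc (x - γ^2) 1) :=
          measure_mono hsub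
      _ ≤ μ (Set.Icc (xpq + γ^2) (x - γ^2)) + μ (Set.Icc (x - γ^2) 1) := measure_union_le _ _
      _ = μ (Set.Icc (x - γ^2) 1) := by rw [h3, zero_add]
  have hbdd : BddAbove ((fun t => t * (μ (Set.Icc t 1)).toReal) '' Set.Icc (0:ℝ) 1) := by
    refine ⟨1, ?_⟩
    rintro y ⟨t, ht, rfl⟩
    have hμ1 : (μ (Set.Icc t 1)).toReal ≤ 1 := by
      have := ENNReal.toReal_mono (by simp) (prob_le_one (μ := μ) (s := Set.Icc t 1))
      simpa using this
    calc t * (μ (Set.Icc t 1)).toReal ≤ 1 * 1 :=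
          mul_le_mul ht.2 hμ1 ENNReal.toReal_nonneg zero_le_one
      _ = 1 := by ring
  have hsup : (x - γ^2) * m ≤
      sSup ((fun t => t * (μ (Set.Icc t 1)).toReal) '' Set.Icc (0:ℝ) 1) := by
    exact le_csSup hbdd ⟨x - γ^2, ⟨hx0, hx1⟩, rfl⟩
  have key : t' * (μ (Set.Icc t' 1)).toReal ≤ (x - γ^2) * m - γ := by
    have h5 : t' * (μ (Set.Icc t' 1)).toReal ≤ t' * m :=
      mul_le_mul_of_nonneg_left hμle ht0
    nlinarith [mul_le_mul_of_nonneg_right htx (le_trans (by linarith) hmq)]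
  linarith
end
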